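/- Let A be a C*-algebra and a, b positive elements. Then a ≾ b if and only if (a − ε)₊ ≾ b for all ε > 0. -/

import Mathlib

open Filter Topology

/-- Cuntz subequivalence: `a ≾ b` iff there is a sequence `(vₙ)` in `A` with
`vₙ b vₙ* → a` in norm. -/
def CuntzSubequiv {A : Type*} [NonUnitalCStarAlgebra A] (a b : A) : Prop :=
  ∃ v : ℕ → A, Tendsto (fun n => v n * b * star (v n)) atTop (nhds a)

/-!
If `a ≾ b`, then so is `(a - ε)₊`, because `(a - ε)₊ = w a w*` for `w = f(a)` with
`f(t) = √((t - ε)₊ / t)` (continuous, as it vanishes near `0`), and conjugating an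
approximating sequence `vₙ b vₙ*` by `w` keeps it approximating.
Conversely, `{c | c ≾ b}` is the closure of `{v b v* | v ∈ A}`, hence closed, and
`(a - ε)₊ → a` as `ε → 0` since `t ↦ (t - ε)₊` converges uniformly to `t ↦ t⁺`,
which is the identity on the spectrum of `a ≥ 0`.
-/

namespace CuntzSubequiv

variable {A : Type*} [NonUnitalCStarAlgebra A]

theorem mul_mul_star {a b : A} (h : CuntzSubequiv a b) (w : A) :
    CuntzSubequiv (w * a * star w) b := by
  obtain ⟨v, hv⟩ := h
  refine ⟨fun n => w * v n, ?_⟩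
  simpa [star_mul, mul_assoc] using (hv.const_mul w).mul_const (star w)

theorem isClosed_setOf (b : A) : IsClosed {a | CuntzSubequiv a b} := by
  convert isClosed_closure (s := Set.range fun v => v * b * star v) using 1
  ext a
  simp only [Set.mem_ofPred_eq, mem_closure_iff_seq_limit, Set.mem_range]
  constructor
  · rintro ⟨v, hv⟩
    exact ⟨_, fun n => ⟨v n, rfl⟩, hv⟩
  · rintro ⟨x, hx, hxa⟩
    choose v hv using hx
    exact ⟨v, by simpa only [hv] using hxa⟩

end CuntzSubequiv

theorem continuous_max_sub_div {ε : ℝ} (hε : 0 < ε) :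
    Continuous fun t : ℝ => max 0 (t - ε) / t := by
  refine continuous_iff_continuousAt.2 fun t => ?_
  rcases eq_or_ne t 0 with rfl | ht
  · refine continuousAt_const (y := (0 : ℝ)) |>.congr ?_
    filter_upwards [Iio_mem_nhds hε] with s hs
    simp [max_eq_left (sub_nonpos.2 (Set.mem_Iio.1 hs).le)]
  · exact ((continuous_const.max (continuous_id.sub continuous_const)).continuousAt).div
      continuousAt_id ht

theorem sqrt_max_sub_div_mul_mul {ε : ℝ} (hε : 0 ≤ ε) (t : ℝ) :
    √(max 0 (t - ε) / t) * t * √(max 0 (t - ε) / t) = max 0 (t - ε) := by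
  have hnonneg : 0 ≤ max 0 (t - ε) / t := by
    rcases le_or_gt t 0 with ht | ht
    · simp [max_eq_left (by linarith : t - ε ≤ 0)]
    · positivity
  calc √(max 0 (t - ε) / t) * t * √(max 0 (t - ε) / t)
      = max 0 (t - ε) / t * t := by rw [mul_right_comm, Real.mul_self_sqrt hnonneg]
    _ = max 0 (t - ε) := div_mul_cancel_of_imp fun ht => by simp [ht, hε]

theorem cfc_mul_mul_cfc {A : Type*} [CStarAlgebra A] (f : ℝ → ℝ) (a : A) (hf : Continuous f)
    (ha : IsSelfAdjoint a) : cfc f a * a * cfc f a = cfc (fun t => f t * t * f t) a := by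
  rw [cfc_mul (fun t => f t * t) f a, cfc_mul f (fun t => t) a, cfc_id' ℝ a]

theorem exists_mul_mul_star_eq_cfc_max_sub {A : Type*} [CStarAlgebra A] {a : A}
    (ha : IsSelfAdjoint a) {ε : ℝ} (hε : 0 < ε) :
    ∃ w : A, w * a * star w = cfc (fun t : ℝ => max 0 (t - ε)) a := by
  set f : ℝ → ℝ := fun t => √(max 0 (t - ε) / t)
  have hf : Continuous f := (continuous_max_sub_div hε).sqrt
  refine ⟨cfc f a, ?_⟩
  rw [(cfc_predicate f a).star_eq, cfc_mul_mul_cfc f a hf ha]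
  exact cfc_congr fun t _ => sqrt_max_sub_div_mul_mul hε.le t

theorem tendsto_cfc_max_sub_nhds_zero {A : Type*} [CStarAlgebra A] [PartialOrder A]
    [StarOrderedRing A] {a : A} (ha : 0 ≤ a) :
    Tendsto (fun ε : ℝ => cfc (fun t : ℝ => max 0 (t - ε)) a) (𝓝 0) (𝓝 a) := by
  have hlim :
      TendstoUniformly (fun ε t : ℝ => max 0 (t - ε)) (fun t => max 0 (t - 0)) (𝓝 0) := by
    refine Metric.tendstoUniformly_iff.2 fun δ hδ => ?_
    filter_upwards [Metric.ball_mem_nhds 0 hδ] with ε hε t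
    rw [Real.dist_eq]
    calc |max 0 (t - 0) - max 0 (t - ε)| ≤ |(t - 0) - (t - ε)| := by
          rw [max_comm 0, max_comm 0]; exact abs_max_sub_max_le_abs _ _ _
      _ < δ := by simpa [Real.dist_eq] using hε
  convert tendsto_cfc_fun hlim.tendstoUniformlyOn (.of_forall fun ε => by fun_prop)
  rw [cfc_congr fun t ht => ?_, cfc_id' ℝ a]
  simpa using spectrum_nonneg_of_nonneg ha ht

theorem stmt_8_general {A : Type*} [CStarAlgebra A] [PartialOrder A] [StarOrderedRing A]
    (a b : A) (ha : 0 ≤ a) :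
    CuntzSubequiv a b ↔
      ∀ ε : ℝ, 0 < ε → CuntzSubequiv (cfc (fun t : ℝ => max 0 (t - ε)) a) b := by
  refine ⟨fun h ε hε => ?_, fun h => ?_⟩
  · obtain ⟨w, hw⟩ := exists_mul_mul_star_eq_cfc_max_sub ha.isSelfAdjoint hε
    exact hw ▸ h.mul_mul_star w
  · exact (CuntzSubequiv.isClosed_setOf b).mem_of_tendsto
      ((tendsto_cfc_max_sub_nhds_zero ha).mono_left (nhdsWithin_le_nhds (s := Set.Ioi 0)))
      (eventually_nhdsWithin_of_forall h)

/-- For positive `a, b` : `a ≾ b` iff `(a − ε)₊ ≾ b` for all `ε > 0`. -/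
theorem stmt_8 {A : Type*} [CStarAlgebra A] [PartialOrder A] [StarOrderedRing A]
    (a b : A) (ha : 0 ≤ a) (hb : 0 ≤ b) :
    CuntzSubequiv a b ↔
      ∀ ε : ℝ, 0 < ε → CuntzSubequiv (cfc (fun t : ℝ => max 0 (t - ε)) a) b :=
  stmt_8_general a b ha
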